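/- arXiv:1604.05494 — 7 statements merged into one kernel-verified Lean document; each statement's English description precedes it below -/
import Mathlib

section
/- Let λ > 0 and let a, b be complex numbers with r₁, r₂ > 0 positive reals satisfying r₁·|a| + r₂·|b| ≤ 1. Then |λa² − b| ≤ max{λ/r₁², 1/r₂}. -/
/-! With `t = r₁‖a‖ ∈ [0, 1]`, the triangle inequality and the constraint give
`‖λa² - b‖ ≤ λ‖a‖² + ‖b‖ ≤ t • (λ / r₁²) + (1 - t) • (1 / r₂)`, a convex combination of the
two candidate bounds, hence at most their maximum. -/

theorem mul_sq_add_le_max_of_mul_add_mul_le_one {lam x y r1 r2 : ℝ} (hlam : 0 ≤ lam)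
    (hx : 0 ≤ x) (hy : 0 ≤ y) (hr1 : 0 < r1) (hr2 : 0 < r2) (h : r1 * x + r2 * y ≤ 1) :
    lam * x ^ 2 + y ≤ max (lam / r1 ^ 2) (1 / r2) := by
  set t := r1 * x with ht
  have ht0 : 0 ≤ t := by positivity
  have ht1 : t ≤ 1 := by nlinarith
  have hx' : lam * x ^ 2 ≤ t • (lam / r1 ^ 2) :=
    calc lam * x ^ 2 = t ^ 2 * (lam / r1 ^ 2) := by rw [ht]; field_simp
      _ ≤ t * (lam / r1 ^ 2) := by gcongr; nlinarith
  have hy' : y ≤ (1 - t) • (1 / r2) := by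
    rw [smul_eq_mul, mul_one_div, le_div_iff₀ hr2]
    linarith
  calc lam * x ^ 2 + y ≤ t • (lam / r1 ^ 2) + (1 - t) • (1 / r2) := add_le_add hx' hy'
    _ ≤ max (lam / r1 ^ 2) (1 / r2) := Convex.combo_le_max _ _ ht0 (by linarith) (by ring)

theorem stmt_1 (lam : ℝ) (hlam : 0 < lam) (a b : ℂ) (r1 r2 : ℝ)
    (hr1 : 0 < r1) (hr2 : 0 < r2)
    (h : r1 * ‖a‖ + r2 * ‖b‖ ≤ 1) :
    ‖(lam * a ^ 2 - b : ℂ)‖ ≤ max (lam / r1 ^ 2) (1 / r2) :=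
  calc ‖(lam * a ^ 2 - b : ℂ)‖ ≤ ‖(lam * a ^ 2 : ℂ)‖ + ‖b‖ := norm_sub_le _ _
    _ = lam * ‖a‖ ^ 2 + ‖b‖ := by
      rw [norm_mul, norm_pow, Complex.norm_real, Real.norm_of_nonneg hlam.le]
    _ ≤ max (lam / r1 ^ 2) (1 / r2) :=
      mul_sq_add_le_max_of_mul_add_mul_le_one hlam.le (norm_nonneg a) (norm_nonneg b) hr1 hr2 h
end

section
/- Let r : ℕ → ℝ be a positive function (r(n) > 0 for all n ≥ 2), and let f(z) = z + ∑_{n≥2} aₙ zⁿ be a power series with complex coefficients satisfying ∑_{n≥2} r(n)|aₙ| ≤ 1. Then for every λ > 0 and every n ≥ 2, |λ aₙ² − a_{2n−1}| ≤ max{λ/r(n)², 1/r(2n−1)}. -/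
/-!
Only two coefficients matter: the constraint gives `u + v ≤ 1` for `u = r(n)|aₙ|` and
`v = r(2n-1)|a_{2n-1}|`. By the triangle inequality the left side is at most
`(λ/r(n)²) u² + (1/r(2n-1)) v`, and since `u ≤ 1` we have `u² ≤ u`, so it is at most
`max (λ/r(n)²) (1/r(2n-1)) · (u + v)`.
-/

lemma add_le_tsum_of_ne {ι : Type*} {f : ι → ℝ} (hf : Summable f) (h0 : ∀ k, 0 ≤ f k)
    {i j : ι} (hij : i ≠ j) : f i + f j ≤ ∑' k, f k := by
  classical
  have := hf.sum_le_tsum {i, j} (fun k _ => h0 k)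
  rwa [Finset.sum_pair hij] at this

lemma mul_sq_add_mul_le_max {A B u v : ℝ} (hA : 0 ≤ A) (hu : 0 ≤ u) (hv : 0 ≤ v)
    (huv : u + v ≤ 1) : A * u ^ 2 + B * v ≤ max A B := by
  have hu_sq : u ^ 2 ≤ u := by nlinarith
  have hM : 0 ≤ max A B := hA.trans (le_max_left A B)
  calc A * u ^ 2 + B * v ≤ max A B * u + max A B * v := by
        gcongr
        · exact le_max_left A B
        · exact le_max_right A B
    _ = max A B * (u + v) := by ring
    _ ≤ max A B := mul_le_of_le_one_right hM huv

lemma mul_sq_add_le_max_of_weighted_le_one {lam p q s t : ℝ} (hlam : 0 ≤ lam) (hp : 0 < p)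
    (hq : 0 < q) (hs : 0 ≤ s) (ht : 0 ≤ t) (hst : p * s + q * t ≤ 1) :
    lam * s ^ 2 + t ≤ max (lam / p ^ 2) (1 / q) := by
  have key := mul_sq_add_mul_le_max (A := lam / p ^ 2) (B := 1 / q) (by positivity)
    (by positivity : 0 ≤ p * s) (by positivity : 0 ≤ q * t) hst
  convert key using 2 <;> field_simp

lemma norm_ofReal_mul_sq_sub_le {𝕜 : Type*} [RCLike 𝕜] {lam : ℝ} (hlam : 0 ≤ lam) (x y : 𝕜) :
    ‖(lam : 𝕜) * x ^ 2 - y‖ ≤ lam * ‖x‖ ^ 2 + ‖y‖ := by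
  calc ‖(lam : 𝕜) * x ^ 2 - y‖ ≤ ‖(lam : 𝕜) * x ^ 2‖ + ‖y‖ := norm_sub_le _ _
    _ = lam * ‖x‖ ^ 2 + ‖y‖ := by
        rw [norm_mul, norm_pow, RCLike.norm_ofReal, abs_of_nonneg hlam]

theorem stmt_2 (r : ℕ → ℝ) (hr : ∀ n, 2 ≤ n → 0 < r n) (a : ℕ → ℂ)
    (hsum : Summable (fun n : ℕ => r (n + 2) * ‖a (n + 2)‖))
    (h : ∑' n : ℕ, r (n + 2) * ‖a (n + 2)‖ ≤ 1)
    (lam : ℝ) (hlam : 0 < lam) (n : ℕ) (hn : 2 ≤ n) :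
    ‖lam * (a n) ^ 2 - a (2 * n - 1)‖ ≤
      max (lam / (r n) ^ 2) (1 / r (2 * n - 1)) := by
  obtain ⟨k, rfl⟩ : ∃ k, n = k + 2 := ⟨n - 2, by omega⟩
  have hodd : 2 * (k + 2) - 1 = 2 * k + 1 + 2 := by omega
  rw [hodd]
  have hpair : r (k + 2) * ‖a (k + 2)‖ + r (2 * k + 1 + 2) * ‖a (2 * k + 1 + 2)‖ ≤ 1 :=
    (add_le_tsum_of_ne hsum (fun i => mul_nonneg (hr _ (by omega)).le (norm_nonneg _))
      (by omega : k ≠ 2 * k + 1)).trans h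
  exact (norm_ofReal_mul_sq_sub_le hlam.le _ _).trans <|
    mul_sq_add_le_max_of_weighted_le_one hlam.le (hr _ (by omega)) (hr _ (by omega))
      (norm_nonneg _) (norm_nonneg _) hpair
end

section
/- Let μ be a probability measure on [0, 2π] and define bₙ = 2∫₀^{2π} e^{inθ} dμ(θ). Then for all integers n, m ≥ 2, |b_{n−1} b_{m−1} − b_{n+m−2}| ≤ 2. -/
/-!
Write `bₖ = 2 φ(k)` with `φ` the characteristic function of `μ`, so that for `p = n - 1`,
`q = m - 1` the quantity is `2 (2 φ(p) φ(q) - φ(p + q))`. For `f = e^{ipθ}`, `g = e^{iqθ}` and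
`A = ∫ f` we have `2 A ∫ g - ∫ f g = ∫ (2A - f) g`, and `f ↦ 2A - f` (reflection through the
constants) preserves the `L²` norm. Hence the modulus is at most `‖2A - f‖₁ ≤ ‖2A - f‖₂ = ‖f‖₂ = 1`.
-/

open MeasureTheory

section
variable {Ω : Type*} [MeasurableSpace Ω] {μ : Measure Ω} [IsProbabilityMeasure μ]

lemma integral_norm_le_sqrt_integral_norm_sq {E : Type*} [NormedAddCommGroup E] {f : Ω → E}
    (hf : MemLp f 2 μ) : ∫ ω, ‖f ω‖ ∂μ ≤ √(∫ ω, ‖f ω‖ ^ 2 ∂μ) := by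
  have hvar := ProbabilityTheory.variance_eq_sub hf.norm
  have := ProbabilityTheory.variance_nonneg (fun ω => ‖f ω‖) μ
  simp only [Pi.pow_apply] at hvar
  exact Real.le_sqrt_of_sq_le (by linarith)

lemma integral_norm_two_mul_integral_sub_sq {f : Ω → ℂ} (hf : MemLp f 2 μ) :
    ∫ ω, ‖2 * (∫ ω, f ω ∂μ) - f ω‖ ^ 2 ∂μ = ∫ ω, ‖f ω‖ ^ 2 ∂μ := by
  set A := ∫ ω, f ω ∂μ
  have hf1 : Integrable f μ := hf.integrable one_le_two
  have hcross : Integrable (fun ω => starRingEnd ℂ A * (A - f ω)) μ :=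
    ((integrable_const A).sub hf1).const_mul _
  have hpt : ∀ ω, ‖2 * A - f ω‖ ^ 2 = ‖f ω‖ ^ 2 + 4 * (starRingEnd ℂ A * (A - f ω)).re := by
    intro ω
    simp only [Complex.sq_norm, Complex.normSq_apply, Complex.mul_re, Complex.sub_re,
      Complex.sub_im, Complex.mul_im, Complex.conj_re, Complex.conj_im]
    norm_num
    ring
  have hzero : ∫ ω, (starRingEnd ℂ A * (A - f ω)).re ∂μ = 0 := by
    have h := integral_re hcross
    simp only [RCLike.re_to_complex] at h
    rw [h, integral_const_mul, integral_sub (integrable_const A) hf1, integral_const]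
    simp [A]
  have hcross_re : Integrable (fun ω => (starRingEnd ℂ A * (A - f ω)).re) μ := hcross.re
  simp_rw [hpt]
  rw [integral_add hf.norm.integrable_sq (hcross_re.const_mul 4), integral_const_mul, hzero,
    mul_zero, add_zero]

lemma norm_two_mul_integral_mul_integral_sub_integral_mul_le {f g : Ω → ℂ} (hf : MemLp f 2 μ)
    (hg : AEStronglyMeasurable g μ) (hg1 : ∀ᵐ ω ∂μ, ‖g ω‖ ≤ 1) :
    ‖2 * (∫ ω, f ω ∂μ) * (∫ ω, g ω ∂μ) - ∫ ω, f ω * g ω ∂μ‖ ≤ √(∫ ω, ‖f ω‖ ^ 2 ∂μ) := by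
  set A := ∫ ω, f ω ∂μ
  have hg' : Integrable g μ := .of_bound hg 1 hg1
  have hh : MemLp (fun ω => 2 * A - f ω) 2 μ := (memLp_const _).sub hf
  have hprod : ∫ ω, (2 * A - f ω) * g ω ∂μ = 2 * A * (∫ ω, g ω ∂μ) - ∫ ω, f ω * g ω ∂μ := by
    simp_rw [sub_mul]
    rw [integral_sub (hg'.const_mul _) ((hf.integrable one_le_two).mul_bdd hg hg1),
      integral_const_mul]
  calc ‖2 * A * (∫ ω, g ω ∂μ) - ∫ ω, f ω * g ω ∂μ‖
      = ‖∫ ω, (2 * A - f ω) * g ω ∂μ‖ := by rw [hprod]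
    _ ≤ ∫ ω, ‖2 * A - f ω‖ ∂μ := by
        refine norm_integral_le_of_norm_le (hh.integrable one_le_two).norm ?_
        filter_upwards [hg1] with ω hω
        rw [norm_mul]
        exact mul_le_of_le_one_right (norm_nonneg _) hω
    _ ≤ √(∫ ω, ‖f ω‖ ^ 2 ∂μ) := by
        rw [← integral_norm_two_mul_integral_sub_sq hf]
        exact integral_norm_le_sqrt_integral_norm_sq hh
end

open Complex in
lemma norm_two_mul_charFun_mul_charFun_sub_charFun_add_le {E : Type*} [SeminormedAddCommGroup E]
    [InnerProductSpace ℝ E] [MeasurableSpace E] [OpensMeasurableSpace E] (μ : Measure E)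
    [IsProbabilityMeasure μ] (s t : E) :
    ‖2 * charFun μ s * charFun μ t - charFun μ (s + t)‖ ≤ 1 := by
  have hchar_norm (u : E) (x : E) : ‖exp (inner ℝ x u * I)‖ = 1 := norm_exp_ofReal_mul_I _
  have hchar_meas (u : E) : AEStronglyMeasurable (fun x => exp (inner ℝ x u * I)) μ := by
    fun_prop
  have hchar_mul (x : E) :
      exp (inner ℝ x s * I) * exp (inner ℝ x t * I) = exp (inner ℝ x (s + t) * I) := by
    rw [← exp_add, inner_add_right, ofReal_add, add_mul]
  have key := norm_two_mul_integral_mul_integral_sub_integral_mul_le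
    (MemLp.of_bound (hchar_meas s) 1 (.of_forall fun x => (hchar_norm s x).le))
    (hchar_meas t) (.of_forall fun x => (hchar_norm t x).le)
  simpa [charFun_apply, hchar_norm, hchar_mul] using key

theorem stmt_4 (μ : Measure (Set.Icc (0 : ℝ) (2 * Real.pi)))
    [IsProbabilityMeasure μ] (b : ℕ → ℂ)
    (hb : ∀ k : ℕ, b k = 2 * ∫ θ, Complex.exp (Complex.I * k * (θ : ℝ)) ∂μ)
    (n m : ℕ) (hn : 2 ≤ n) (hm : 2 ≤ m) :
    ‖b (n - 1) * b (m - 1) - b (n + m - 2)‖ ≤ 2 := by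
  set ν := μ.map Subtype.val
  have : IsProbabilityMeasure ν := Measure.isProbabilityMeasure_map (by fun_prop)
  have hb_charFun (k : ℕ) : b k = 2 * charFun ν k := by
    rw [hb, charFun_apply_real, integral_map (by fun_prop) (by fun_prop)]
    congr 2 with θ
    push_cast
    ring_nf
  obtain ⟨p, rfl⟩ : ∃ p, n = p + 1 := ⟨n - 1, by omega⟩
  obtain ⟨q, rfl⟩ : ∃ q, m = q + 1 := ⟨m - 1, by omega⟩
  have hb_combo : b (p + 1 - 1) * b (q + 1 - 1) - b (p + 1 + (q + 1) - 2)
      = 2 * (2 * charFun ν p * charFun ν q - charFun ν (p + q)) := by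
    rw [show p + 1 + (q + 1) - 2 = p + q by omega, Nat.add_sub_cancel, Nat.add_sub_cancel,
      hb_charFun, hb_charFun, hb_charFun]
    push_cast
    ring
  rw [hb_combo, norm_mul, Complex.norm_two]
  linarith [norm_two_mul_charFun_mul_charFun_sub_charFun_add_le ν p q]
end

section
/- Let μ be a probability measure on [0,2π] and set aₙ = ∫₀^{2π} e^{i(n−1)θ} dμ(θ) for n ≥ 2. Then for all n, m ≥ 2 and all real λ ≥ 2, |λ aₙ aₘ − a_{n+m−1}| ≤ λ − 1. -/
/-!
With `f = e^{i(n-1)θ}`, `g = e^{i(m-1)θ}` we have `a_{n+m-1} = ∫ f g`. For unimodular `f, g`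
with means `x, y`, Cauchy–Schwarz applied to `∫ f g - x y = ∫ (f - x)(g - y)` gives
`|∫ f g - x y| ≤ √(1 - |x|²) √(1 - |y|²) ≤ 1 - |x||y|`, so
`|λ x y - ∫ f g| ≤ (λ - 1)|x||y| + 1 - |x||y| ≤ λ - 1` because `λ ≥ 2` and `|x||y| ≤ 1`.
-/

open MeasureTheory

theorem Real.sqrt_one_sub_sq_mul_sqrt_one_sub_sq_le {s t : ℝ} (hs : |s| ≤ 1) (ht : |t| ≤ 1) :
    √(1 - s ^ 2) * √(1 - t ^ 2) ≤ 1 - s * t := by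
  have hst : s * t ≤ 1 :=
    (le_abs_self _).trans (abs_mul s t ▸ mul_le_one₀ hs (abs_nonneg t) ht)
  rw [← Real.sqrt_mul (sub_nonneg.2 ((sq_le_one_iff_abs_le_one s).2 hs)),
    ← Real.sqrt_sq (sub_nonneg.2 hst)]
  exact Real.sqrt_le_sqrt (by nlinarith [sq_nonneg (s - t)])

section

variable {α : Type*} [MeasurableSpace α] {μ : Measure α} [IsProbabilityMeasure μ]

theorem integral_norm_sub_integral_sq_of_norm_eq_one {f : α → ℂ} (hf : Integrable f μ)
    (hf1 : ∀ t, ‖f t‖ = 1) :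
    ∫ t, ‖f t - ∫ s, f s ∂μ‖ ^ 2 ∂μ = 1 - ‖∫ s, f s ∂μ‖ ^ 2 := by
  set x := ∫ s, f s ∂μ
  have hpoint : ∀ t, ‖f t - x‖ ^ 2 = 1 + ‖x‖ ^ 2 - 2 * (f t * (starRingEnd ℂ) x).re := by
    intro t
    rw [← Complex.normSq_eq_norm_sq, Complex.normSq_sub, Complex.normSq_eq_norm_sq,
      Complex.normSq_eq_norm_sq, hf1 t, one_pow]
  have hre : ∫ t, (f t * (starRingEnd ℂ) x).re ∂μ = ‖x‖ ^ 2 := by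
    calc ∫ t, (f t * (starRingEnd ℂ) x).re ∂μ = (∫ t, f t * (starRingEnd ℂ) x ∂μ).re :=
          integral_re (hf.mul_const _)
      _ = ‖x‖ ^ 2 := by
          rw [integral_mul_const, Complex.mul_conj, Complex.normSq_eq_norm_sq]
          norm_cast
  have hint : Integrable (fun t => 2 * (f t * (starRingEnd ℂ) x).re) μ :=
    ((hf.mul_const _).re).const_mul 2
  simp_rw [hpoint]
  rw [integral_sub (integrable_const _) hint, integral_const, integral_const_mul, hre]
  simp only [probReal_univ, one_smul]
  ring

theorem integral_sub_integral_mul_sub_integral {f g : α → ℂ} (hf : Integrable f μ)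
    (hg : Integrable g μ) (hfg : Integrable (fun t => f t * g t) μ) :
    ∫ t, (f t - ∫ s, f s ∂μ) * (g t - ∫ s, g s ∂μ) ∂μ
      = ∫ t, f t * g t ∂μ - (∫ s, f s ∂μ) * ∫ s, g s ∂μ := by
  set x := ∫ s, f s ∂μ
  set y := ∫ s, g s ∂μ
  have hexpand : ∀ t, (f t - x) * (g t - y) = f t * g t - x * g t - f t * y + x * y :=
    fun t => by ring
  have hfg_xg : Integrable (fun t => f t * g t - x * g t) μ := hfg.sub (hg.const_mul x)
  have hfg_xg_fy : Integrable (fun t => f t * g t - x * g t - f t * y) μ :=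
    hfg_xg.sub (hf.mul_const y)
  simp_rw [hexpand]
  rw [integral_add hfg_xg_fy (integrable_const _), integral_sub hfg_xg (hf.mul_const y),
    integral_sub hfg (hg.const_mul x), integral_const_mul, integral_mul_const, integral_const]
  simp only [probReal_univ, one_smul]
  ring

theorem norm_integral_mul_sub_integral_mul_integral_le {f g : α → ℂ}
    (hf : AEStronglyMeasurable f μ) (hg : AEStronglyMeasurable g μ)
    (hf1 : ∀ t, ‖f t‖ = 1) (hg1 : ∀ t, ‖g t‖ = 1) :
    ‖∫ t, f t * g t ∂μ - (∫ s, f s ∂μ) * ∫ s, g s ∂μ‖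
      ≤ √(1 - ‖∫ s, f s ∂μ‖ ^ 2) * √(1 - ‖∫ s, g s ∂μ‖ ^ 2) := by
  have hfi : Integrable f μ := .of_bound hf 1 (.of_forall fun t => (hf1 t).le)
  have hgi : Integrable g μ := .of_bound hg 1 (.of_forall fun t => (hg1 t).le)
  have hfgi : Integrable (fun t => f t * g t) μ :=
    .of_bound (hf.mul hg) 1 (.of_forall fun t => by simp [hf1 t, hg1 t])
  have hL2 : ∀ (h : α → ℂ) (c : ℂ), AEStronglyMeasurable h μ → (∀ t, ‖h t‖ = 1) →
      MemLp (fun t => ‖h t - c‖) (ENNReal.ofReal 2) μ := fun h c hh hh1 =>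
    .of_bound (hh.sub aestronglyMeasurable_const).norm (1 + ‖c‖)
      (.of_forall fun t => by simpa [hh1 t] using norm_sub_le (h t) c)
  rw [← integral_sub_integral_mul_sub_integral hfi hgi hfgi]
  calc ‖∫ t, (f t - ∫ s, f s ∂μ) * (g t - ∫ s, g s ∂μ) ∂μ‖
      ≤ ∫ t, ‖f t - ∫ s, f s ∂μ‖ * ‖g t - ∫ s, g s ∂μ‖ ∂μ := by
        simpa only [norm_mul] using norm_integral_le_integral_norm
          (fun t => (f t - ∫ s, f s ∂μ) * (g t - ∫ s, g s ∂μ))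
    _ ≤ (∫ t, ‖f t - ∫ s, f s ∂μ‖ ^ (2 : ℝ) ∂μ) ^ (1 / (2 : ℝ))
          * (∫ t, ‖g t - ∫ s, g s ∂μ‖ ^ (2 : ℝ) ∂μ) ^ (1 / (2 : ℝ)) :=
        integral_mul_le_Lp_mul_Lq_of_nonneg .two_two (.of_forall fun _ => norm_nonneg _)
          (.of_forall fun _ => norm_nonneg _) (hL2 f _ hf hf1) (hL2 g _ hg hg1)
    _ = √(1 - ‖∫ s, f s ∂μ‖ ^ 2) * √(1 - ‖∫ s, g s ∂μ‖ ^ 2) := by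
        simp only [Real.rpow_two, integral_norm_sub_integral_sq_of_norm_eq_one hfi hf1,
          integral_norm_sub_integral_sq_of_norm_eq_one hgi hg1, Real.sqrt_eq_rpow]

theorem norm_ofReal_mul_integral_mul_integral_sub_integral_mul_le {f g : α → ℂ}
    (hf : AEStronglyMeasurable f μ) (hg : AEStronglyMeasurable g μ)
    (hf1 : ∀ t, ‖f t‖ = 1) (hg1 : ∀ t, ‖g t‖ = 1) {lam : ℝ} (hlam : 2 ≤ lam) :
    ‖(lam : ℂ) * (∫ s, f s ∂μ) * (∫ s, g s ∂μ) - ∫ s, f s * g s ∂μ‖ ≤ lam - 1 := by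
  have hcov := norm_integral_mul_sub_integral_mul_integral_le hf hg hf1 hg1
  set x := ∫ s, f s ∂μ
  set y := ∫ s, g s ∂μ
  have hx : ‖x‖ ≤ 1 := by
    simpa using norm_integral_le_of_norm_le_const (μ := μ) (.of_forall fun t => (hf1 t).le)
  have hy : ‖y‖ ≤ 1 := by
    simpa using norm_integral_le_of_norm_le_const (μ := μ) (.of_forall fun t => (hg1 t).le)
  have hxy : ‖x‖ * ‖y‖ ≤ 1 := mul_le_one₀ hx (norm_nonneg _) hy
  have hlam_sub : ‖(lam : ℂ) - 1‖ = lam - 1 := by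
    rw [← Complex.ofReal_one, ← Complex.ofReal_sub, Complex.norm_of_nonneg (by linarith)]
  calc ‖(lam : ℂ) * x * y - ∫ s, f s * g s ∂μ‖
      = ‖((lam : ℂ) - 1) * (x * y) - ((∫ s, f s * g s ∂μ) - x * y)‖ := by ring_nf
    _ ≤ (lam - 1) * (‖x‖ * ‖y‖) + (1 - ‖x‖ * ‖y‖) := by
        refine (norm_sub_le _ _).trans (add_le_add ?_ ?_)
        · rw [norm_mul, norm_mul, hlam_sub]
        · exact hcov.trans (Real.sqrt_one_sub_sq_mul_sqrt_one_sub_sq_le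
            (by rwa [abs_norm]) (by rwa [abs_norm]))
    _ ≤ lam - 1 := by nlinarith [mul_nonneg (norm_nonneg x) (norm_nonneg y)]

end

theorem stmt_6 (μ : Measure (Set.Icc (0 : ℝ) (2 * Real.pi)))
    [IsProbabilityMeasure μ] (a : ℕ → ℂ)
    (ha : ∀ k, 2 ≤ k →
      a k = ∫ θ, Complex.exp (Complex.I * ((k : ℂ) - 1) * (θ : ℝ)) ∂μ)
    (n m : ℕ) (hn : 2 ≤ n) (hm : 2 ≤ m) (lam : ℝ) (hlam : 2 ≤ lam) :
    ‖(lam : ℂ) * a n * a m - a (n + m - 1)‖ ≤ lam - 1 := by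
  set e : ℕ → Set.Icc (0 : ℝ) (2 * Real.pi) → ℂ :=
    fun k θ => Complex.exp (Complex.I * ((k : ℂ) - 1) * (θ : ℝ))
  have he_norm : ∀ k θ, ‖e k θ‖ = 1 := fun k θ => by simp [e, Complex.norm_exp]
  have he_meas : ∀ k, AEStronglyMeasurable (e k) μ := fun k => by fun_prop
  have he_mul : ∀ θ, e (n + m - 1) θ = e n θ * e m θ := fun θ => by
    simp only [e, ← Complex.exp_add]
    push_cast [Nat.cast_sub (by omega : 1 ≤ n + m)]
    ring_nf
  rw [ha n hn, ha m hm, ha (n + m - 1) (by omega)]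
  change ‖(lam : ℂ) * (∫ θ, e n θ ∂μ) * (∫ θ, e m θ ∂μ) - ∫ θ, e (n + m - 1) θ ∂μ‖ ≤ lam - 1
  simp_rw [he_mul]
  exact norm_ofReal_mul_integral_mul_integral_sub_integral_mul_le (he_meas n) (he_meas m)
    (he_norm n) (he_norm m) hlam
end

section
/- Let μ be a probability measure on [0,2π] and set aₙ = ∫₀^{2π} e^{i(n−1)θ} dμ(θ) for n ≥ 2. Then for all n ≥ 2 and λ ≥ 2, |λ aₙ² − a_{2n−1}| ≤ λ − 1. -/
/-!
With `f θ = exp (i (n - 1) θ)` we have `aₙ = E f` and `a₂ₙ₋₁ = E f²`. Since `|f| = 1`,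
`|E f² - (E f)²| = |E (f - E f)²| ≤ E |f - E f|² = 1 - |E f|²`, hence
`|λ aₙ² - a₂ₙ₋₁| ≤ (λ - 1) |aₙ|² + 1 - |aₙ|² ≤ λ - 1`, the last step because `λ ≥ 2`.
-/

open MeasureTheory ComplexConjugate

lemma norm_mul_sq_sub_le_of_norm_sub_sq_le {z w : ℂ} (h : ‖w - z ^ 2‖ ≤ 1 - ‖z‖ ^ 2) {lam : ℝ}
    (hlam : 2 ≤ lam) : ‖(lam : ℂ) * z ^ 2 - w‖ ≤ lam - 1 := by
  have hz : ‖z‖ ^ 2 ≤ 1 := by linarith [norm_nonneg (w - z ^ 2)]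
  calc ‖(lam : ℂ) * z ^ 2 - w‖ = ‖((lam - 1 : ℝ) : ℂ) * z ^ 2 - (w - z ^ 2)‖ := by
        push_cast; ring_nf
    _ ≤ (lam - 1) * ‖z‖ ^ 2 + (1 - ‖z‖ ^ 2) := by
        refine (norm_sub_le _ _).trans (add_le_add (le_of_eq ?_) h)
        rw [norm_mul, norm_pow, Complex.norm_real, Real.norm_of_nonneg (by linarith)]
    _ ≤ lam - 1 := by nlinarith

section CentralSecondMoment

variable {Ω : Type*} [MeasurableSpace Ω] {μ : Measure Ω} [IsProbabilityMeasure μ] {f : Ω → ℂ}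

lemma integral_sq_sub_sq_integral (hf : MemLp f 2 μ) :
    ∫ x, f x ^ 2 ∂μ - (∫ x, f x ∂μ) ^ 2 = ∫ x, (f x - ∫ y, f y ∂μ) ^ 2 ∂μ := by
  set c := ∫ y, f y ∂μ
  have hf1 : Integrable f μ := hf.integrable one_le_two
  have hf2 : Integrable (fun x => f x ^ 2) μ := by
    simpa only [sq, Pi.mul_def] using hf.integrable_mul hf
  have hlin : Integrable (fun x => f x ^ 2 - 2 * c * f x) μ := hf2.sub (hf1.const_mul _)
  have hexpand : ∀ x, (f x - c) ^ 2 = f x ^ 2 - 2 * c * f x + c ^ 2 := fun x => by ring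
  simp only [hexpand]
  rw [integral_add hlin (integrable_const _), integral_sub hf2 (hf1.const_mul _),
    integral_const_mul, integral_const, probReal_univ, one_smul]
  ring

lemma integral_norm_sub_integral_sq (hf : MemLp f 2 μ) :
    ∫ x, ‖f x - ∫ y, f y ∂μ‖ ^ 2 ∂μ = ∫ x, ‖f x‖ ^ 2 ∂μ - ‖∫ x, f x ∂μ‖ ^ 2 := by
  set c := ∫ y, f y ∂μ
  have hf1 : Integrable f μ := hf.integrable one_le_two
  have hcross : Integrable (fun x => (f x * conj c).re) μ := (hf1.mul_const _).re
  have hsq : Integrable (fun x => ‖f x‖ ^ 2 + ‖c‖ ^ 2) μ :=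
    hf.integrable_norm_pow'.add (integrable_const _)
  have hcross_int : ∫ x, (f x * conj c).re ∂μ = ‖c‖ ^ 2 := by
    have hre := integral_re (𝕜 := ℂ) (hf1.mul_const (conj c))
    simp only [RCLike.re_to_complex] at hre
    rw [hre, integral_mul_const, Complex.mul_conj, Complex.normSq_eq_norm_sq, Complex.ofReal_re]
  have hexpand : ∀ x, ‖f x - c‖ ^ 2 = ‖f x‖ ^ 2 + ‖c‖ ^ 2 - 2 * (f x * conj c).re :=
    fun x => by simp only [Complex.sq_norm, Complex.normSq_sub]
  simp only [hexpand]
  rw [integral_sub hsq (hcross.const_mul 2),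
    integral_add hf.integrable_norm_pow' (integrable_const _), integral_const_mul,
    hcross_int, integral_const, probReal_univ, one_smul]
  ring

lemma norm_integral_sq_sub_sq_integral_le (hf : MemLp f 2 μ) :
    ‖∫ x, f x ^ 2 ∂μ - (∫ x, f x ∂μ) ^ 2‖ ≤ ∫ x, ‖f x‖ ^ 2 ∂μ - ‖∫ x, f x ∂μ‖ ^ 2 :=
  calc ‖∫ x, f x ^ 2 ∂μ - (∫ x, f x ∂μ) ^ 2‖
      = ‖∫ x, (f x - ∫ y, f y ∂μ) ^ 2 ∂μ‖ := by rw [integral_sq_sub_sq_integral hf]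
    _ ≤ ∫ x, ‖f x - ∫ y, f y ∂μ‖ ^ 2 ∂μ :=
      (norm_integral_le_integral_norm _).trans_eq (by simp only [norm_pow])
    _ = _ := integral_norm_sub_integral_sq hf

lemma norm_integral_sq_sub_sq_integral_le_of_norm_eq_one (hf : AEStronglyMeasurable f μ)
    (h_one : ∀ x, ‖f x‖ = 1) :
    ‖∫ x, f x ^ 2 ∂μ - (∫ x, f x ∂μ) ^ 2‖ ≤ 1 - ‖∫ x, f x ∂μ‖ ^ 2 := by
  have hf2 : MemLp f 2 μ := .of_bound hf 1 (.of_forall fun x => (h_one x).le)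
  simpa [h_one] using norm_integral_sq_sub_sq_integral_le hf2

end CentralSecondMoment

theorem stmt_7 (μ : Measure (Set.Icc (0 : ℝ) (2 * Real.pi)))
    [IsProbabilityMeasure μ] (a : ℕ → ℂ)
    (ha : ∀ k, 2 ≤ k →
      a k = ∫ θ, Complex.exp (Complex.I * ((k : ℂ) - 1) * (θ : ℝ)) ∂μ)
    (n : ℕ) (hn : 2 ≤ n) (lam : ℝ) (hlam : 2 ≤ lam) :
    ‖(lam : ℂ) * (a n) ^ 2 - a (2 * n - 1)‖ ≤ lam - 1 := by
  set f : Set.Icc (0 : ℝ) (2 * Real.pi) → ℂ :=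
    fun θ => Complex.exp (Complex.I * ((n : ℂ) - 1) * (θ : ℝ))
  have hf_one : ∀ θ, ‖f θ‖ = 1 := fun θ => by
    have : Complex.I * ((n : ℂ) - 1) * (θ : ℝ) = (((n - 1) * θ : ℝ) : ℂ) * Complex.I := by
      push_cast; ring
    simp only [f, this, Complex.norm_exp_ofReal_mul_I]
  have h_odd : a (2 * n - 1) = ∫ θ, f θ ^ 2 ∂μ := by
    have hk : ((2 * n - 1 : ℕ) : ℂ) - 1 = 2 * ((n : ℂ) - 1) := by
      push_cast [Nat.cast_sub (by omega : 1 ≤ 2 * n)]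
      ring
    rw [ha (2 * n - 1) (by omega)]
    simp only [f, hk, ← Complex.exp_nat_mul]
    ring_nf
  rw [ha n hn, h_odd]
  have hf_cont : Continuous f := by fun_prop
  exact norm_mul_sq_sub_le_of_norm_sub_sq_le
    (norm_integral_sq_sub_sq_integral_le_of_norm_eq_one hf_cont.aestronglyMeasurable hf_one) hlam
end

section
/- Fix β ∈ [0,1). Let μ be a probability measure on [0,2π] and set aₙ = (2(1−β)/n) ∫₀^{2π} e^{i(n−1)θ} dμ(θ) for n ≥ 2. Then for all n ≥ 2 and λ ≥ n²/((2n−1)(1−β)): |λ aₙ² − a_{2n−1}| ≤ 4λ(1−β)²/n² − 2(1−β)/(2n−1). -/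
/-!
With `g θ = exp (i (n - 1) θ)`, the coefficients `a n` and `a (2n - 1)` are real multiples of
`m = ∫ g` and `∫ g²`. Since `|g| = 1`, the "complex variance" `∫ g² - m² = ∫ (g - m)²` has
modulus at most `∫ |g - m|² = 1 - |m|²`. Writing `λ a_n² - a_{2n-1} = (A - B) m² + B (m² - ∫ g²)`
bounds it by `(A - B)|m|² + B (1 - |m|²)`, which is at most `A - B` exactly when `2B ≤ A`,
i.e. when `λ ≥ n² / ((2n - 1)(1 - β))`.
-/

open MeasureTheory Complex ComplexConjugate

section

variable {α : Type*} [MeasurableSpace α] {μ : Measure α} [IsProbabilityMeasure μ] {g : α → ℂ}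

lemma integral_norm_sub_integral_sq_s9 (hg : Integrable g μ)
    (hg2 : Integrable (fun x => ‖g x‖ ^ 2) μ) :
    ∫ x, ‖g x - ∫ y, g y ∂μ‖ ^ 2 ∂μ = ∫ x, ‖g x‖ ^ 2 ∂μ - ‖∫ x, g x ∂μ‖ ^ 2 := by
  set m := ∫ x, g x ∂μ
  have hexpand : ∀ x, ‖g x - m‖ ^ 2 = ‖g x‖ ^ 2 - 2 * (g x * conj m).re + ‖m‖ ^ 2 := by
    intro x
    simp only [← normSq_eq_norm_sq, normSq_sub]
    ring
  have hcross_int : Integrable (fun x => (g x * conj m).re) μ := (hg.mul_const _).re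
  have hcross : ∫ x, (g x * conj m).re ∂μ = ‖m‖ ^ 2 := by
    have hre : ∫ x, (g x * conj m).re ∂μ = (∫ x, g x * conj m ∂μ).re :=
      integral_re (hg.mul_const _)
    rw [hre, integral_mul_const, mul_conj, normSq_eq_norm_sq]
    norm_cast
  simp_rw [hexpand]
  rw [integral_add (by exact hg2.sub (hcross_int.const_mul 2)) (integrable_const _),
    integral_sub hg2 (hcross_int.const_mul 2), integral_const_mul, hcross]
  simp only [integral_const, probReal_univ, smul_eq_mul, one_mul]
  ring

lemma norm_integral_sq_sub_sq_integral_le_s9 (hg : AEStronglyMeasurable g μ)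
    (hg1 : ∀ᵐ x ∂μ, ‖g x‖ ≤ 1) :
    ‖∫ x, g x ^ 2 ∂μ - (∫ x, g x ∂μ) ^ 2‖ ≤ 1 - ‖∫ x, g x ∂μ‖ ^ 2 := by
  have hg_int : Integrable g μ := .of_bound hg 1 hg1
  have hg2_int : Integrable (fun x => g x ^ 2) μ :=
    .of_bound (hg.pow 2) 1 (hg1.mono fun x hx => by
      rw [norm_pow]; exact pow_le_one₀ (norm_nonneg _) hx)
  have hnorm2_int : Integrable (fun x => ‖g x‖ ^ 2) μ := by
    simpa [norm_pow] using hg2_int.norm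
  set m := ∫ x, g x ∂μ
  have hcentered : ∫ x, g x ^ 2 ∂μ - m ^ 2 = ∫ x, (g x - m) ^ 2 ∂μ := by
    have : ∀ x, (g x - m) ^ 2 = g x ^ 2 - 2 * m * g x + m ^ 2 := fun x => by ring
    simp_rw [this]
    rw [integral_add (by exact hg2_int.sub (hg_int.const_mul _)) (integrable_const _),
      integral_sub hg2_int (hg_int.const_mul _), integral_const_mul]
    simp only [integral_const, probReal_univ, one_smul]
    ring
  have hsecond : ∫ x, ‖g x‖ ^ 2 ∂μ ≤ 1 := by
    calc ∫ x, ‖g x‖ ^ 2 ∂μ ≤ ∫ _, (1 : ℝ) ∂μ :=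
          integral_mono_ae hnorm2_int (integrable_const _)
            (hg1.mono fun x hx => pow_le_one₀ (norm_nonneg _) hx)
      _ = 1 := by simp
  calc ‖∫ x, g x ^ 2 ∂μ - m ^ 2‖ = ‖∫ x, (g x - m) ^ 2 ∂μ‖ := by rw [hcentered]
    _ ≤ ∫ x, ‖g x - m‖ ^ 2 ∂μ :=
        (norm_integral_le_integral_norm _).trans_eq (by simp only [norm_pow])
    _ = ∫ x, ‖g x‖ ^ 2 ∂μ - ‖m‖ ^ 2 := integral_norm_sub_integral_sq_s9 hg_int hnorm2_int
    _ ≤ 1 - ‖m‖ ^ 2 := by linarith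

end

lemma norm_mul_sq_sub_mul_le {z w : ℂ} {A B : ℝ} (hB : 0 ≤ B) (hAB : 2 * B ≤ A)
    (hzw : ‖w - z ^ 2‖ ≤ 1 - ‖z‖ ^ 2) :
    ‖(A : ℂ) * z ^ 2 - B * w‖ ≤ A - B := by
  have hz : ‖z‖ ^ 2 ≤ 1 := by linarith [norm_nonneg (w - z ^ 2)]
  have hsplit : (A : ℂ) * z ^ 2 - B * w = ((A - B : ℝ) : ℂ) * z ^ 2 - B * (w - z ^ 2) := by
    push_cast; ring
  calc ‖(A : ℂ) * z ^ 2 - B * w‖ ≤ (A - B) * ‖z‖ ^ 2 + B * ‖w - z ^ 2‖ := by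
        rw [hsplit]
        refine (norm_sub_le _ _).trans_eq ?_
        rw [norm_mul, norm_mul, norm_pow, norm_real, norm_real, Real.norm_of_nonneg hB,
          Real.norm_of_nonneg (by linarith)]
    _ ≤ (A - B) * ‖z‖ ^ 2 + B * (1 - ‖z‖ ^ 2) := by gcongr
    _ ≤ A - B := by nlinarith

theorem stmt_9_general (β : ℝ) (hβ1 : β < 1)
    (μ : Measure (Set.Icc (0 : ℝ) (2 * Real.pi))) [IsProbabilityMeasure μ]
    (a : ℕ → ℂ)
    (ha : ∀ k, 2 ≤ k →
      a k = ((2 * (1 - β) / k : ℝ) : ℂ) *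
        ∫ θ, Complex.exp (Complex.I * ((k : ℂ) - 1) * (θ : ℝ)) ∂μ)
    (n : ℕ) (hn : 2 ≤ n) (lam : ℝ)
    (hlam : (n : ℝ) ^ 2 / ((2 * (n : ℝ) - 1) * (1 - β)) ≤ lam) :
    ‖(lam : ℂ) * (a n) ^ 2 - a (2 * n - 1)‖ ≤
      4 * lam * (1 - β) ^ 2 / (n : ℝ) ^ 2 - 2 * (1 - β) / (2 * (n : ℝ) - 1) := by
  set g : Set.Icc (0 : ℝ) (2 * Real.pi) → ℂ := fun θ => exp (I * ((n : ℂ) - 1) * (θ : ℝ))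
  have hg_meas : AEStronglyMeasurable g μ := (by fun_prop : Continuous g).aestronglyMeasurable
  have hg_norm : ∀ θ, ‖g θ‖ ≤ 1 := fun θ => by
    dsimp only [g]
    rw [show I * ((n : ℂ) - 1) * (θ : ℝ) = (((n - 1) * θ : ℝ) : ℂ) * I by push_cast; ring,
      norm_exp_ofReal_mul_I]
  have hn_real : (2 : ℝ) ≤ n := by exact_mod_cast hn
  have han : a n = ((2 * (1 - β) / n : ℝ) : ℂ) * ∫ θ, g θ ∂μ := ha n hn
  have ha2n : a (2 * n - 1) = ((2 * (1 - β) / (2 * n - 1) : ℝ) : ℂ) * ∫ θ, g θ ^ 2 ∂μ := by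
    have hcast : ((2 * n - 1 : ℕ) : ℝ) = 2 * n - 1 := by
      rw [Nat.cast_sub (by omega)]; push_cast; ring
    simp_rw [ha (2 * n - 1) (by omega), g, ← exp_nat_mul, ← ofReal_natCast, hcast]
    push_cast
    ring_nf
  have hβ : 0 < 1 - β := by linarith
  have h2n : (0 : ℝ) < 2 * n - 1 := by linarith
  have hlam' : (n : ℝ) ^ 2 ≤ lam * ((2 * n - 1) * (1 - β)) :=
    (div_le_iff₀ (by positivity)).1 hlam
  have hAB : 2 * (2 * (1 - β) / (2 * n - 1)) ≤ lam * (2 * (1 - β) / n) ^ 2 := by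
    rw [div_pow, mul_div_assoc', ← mul_div_assoc, div_le_div_iff₀ h2n (by positivity)]
    nlinarith [mul_le_mul_of_nonneg_left hlam' hβ.le]
  have key := norm_mul_sq_sub_mul_le (by positivity) hAB
    (norm_integral_sq_sub_sq_integral_le_s9 hg_meas (ae_of_all _ hg_norm))
  convert key using 2
  · rw [han, ha2n]; push_cast; ring
  · ring

theorem stmt_9 (β : ℝ) (hβ0 : 0 ≤ β) (hβ1 : β < 1)
    (μ : Measure (Set.Icc (0 : ℝ) (2 * Real.pi))) [IsProbabilityMeasure μ]
    (a : ℕ → ℂ)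
    (ha : ∀ k, 2 ≤ k →
      a k = ((2 * (1 - β) / k : ℝ) : ℂ) *
        ∫ θ, Complex.exp (Complex.I * ((k : ℂ) - 1) * (θ : ℝ)) ∂μ)
    (n : ℕ) (hn : 2 ≤ n) (lam : ℝ)
    (hlam : (n : ℝ) ^ 2 / ((2 * (n : ℝ) - 1) * (1 - β)) ≤ lam) :
    ‖(lam : ℂ) * (a n) ^ 2 - a (2 * n - 1)‖ ≤
      4 * lam * (1 - β) ^ 2 / (n : ℝ) ^ 2 - 2 * (1 - β) / (2 * (n : ℝ) - 1) :=
  stmt_9_general β hβ1 μ a ha n hn lam hlam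
end

section
/- Let f(z) = z + ∑_{n≥2} aₙ zⁿ satisfy ∑_{n≥2} (3n−2)|aₙ| ≤ 1 (a sufficient condition for uniform starlikeness). Then for every λ > 0 and n ≥ 2, |λ aₙ² − a_{2n−1}| ≤ max{λ/(3n−2)², 1/(6n−5)}. -/
/-!
Writing `x = (3n-2)|aₙ|` and `y = (6n-5)|a_{2n-1}|`, the coefficient condition gives `x + y ≤ 1`,
since `6n - 5 = 3(2n-1) - 2` is the weight of `a_{2n-1}`. By the triangle inequality the quantity is
at most `c x² + d y` with `c = λ/(3n-2)²`, `d = 1/(6n-5)`, and `c x² + d y ≤ c x + d y ≤ max c d`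
because `x² ≤ x` and `(x, y)` lies in the standard simplex.
-/

lemma mul_sq_add_mul_le_max_s12 {c d x y : ℝ} (hc : 0 ≤ c) (hx : 0 ≤ x) (hy : 0 ≤ y)
    (hxy : x + y ≤ 1) : c * x ^ 2 + d * y ≤ max c d := by
  have hM : 0 ≤ max c d := hc.trans (le_max_left c d)
  have hx1 : x ≤ 1 := by linarith
  calc c * x ^ 2 + d * y ≤ max c d * x + max c d * y := by
        refine add_le_add ?_ (by gcongr; exact le_max_right c d)
        calc c * x ^ 2 ≤ c * x := by gcongr; nlinarith
          _ ≤ max c d * x := by gcongr; exact le_max_left c d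
    _ = max c d * (x + y) := by ring
    _ ≤ max c d := mul_le_of_le_one_right hM hxy

lemma weighted_norm_add_weighted_norm_le_one (a : ℕ → ℂ)
    (hsum : Summable (fun n : ℕ => (3 * ((n : ℝ) + 2) - 2) * ‖a (n + 2)‖))
    (h : ∑' n : ℕ, (3 * ((n : ℝ) + 2) - 2) * ‖a (n + 2)‖ ≤ 1)
    {m k : ℕ} (hm : 2 ≤ m) (hk : 2 ≤ k) (hmk : m ≠ k) :
    (3 * (m : ℝ) - 2) * ‖a m‖ + (3 * (k : ℝ) - 2) * ‖a k‖ ≤ 1 := by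
  have hterm (i : ℕ) : 0 ≤ (3 * ((i : ℝ) + 2) - 2) * ‖a (i + 2)‖ :=
    mul_nonneg (by linarith [i.cast_nonneg (α := ℝ)]) (norm_nonneg _)
  have hpair := hsum.sum_le_tsum {m - 2, k - 2} (fun i _ => hterm i)
  rw [Finset.sum_pair (by omega), Nat.sub_add_cancel hm, Nat.sub_add_cancel hk,
    Nat.cast_sub hm, Nat.cast_sub hk] at hpair
  push_cast at hpair
  linarith

theorem stmt_12 (a : ℕ → ℂ)
    (hsum : Summable (fun n : ℕ => (3 * ((n : ℝ) + 2) - 2) * ‖a (n + 2)‖))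
    (h : ∑' n : ℕ, (3 * ((n : ℝ) + 2) - 2) * ‖a (n + 2)‖ ≤ 1)
    (lam : ℝ) (hlam : 0 < lam) (n : ℕ) (hn : 2 ≤ n) :
    ‖lam * (a n) ^ 2 - a (2 * n - 1)‖ ≤
      max (lam / (3 * (n : ℝ) - 2) ^ 2) (1 / (6 * (n : ℝ) - 5)) := by
  have hn' : (2 : ℝ) ≤ n := by exact_mod_cast hn
  have hp : 3 * (n : ℝ) - 2 ≠ 0 := by linarith
  have hq : 6 * (n : ℝ) - 5 ≠ 0 := by linarith
  have hweight : 3 * ((2 * n - 1 : ℕ) : ℝ) - 2 = 6 * n - 5 := by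
    rw [Nat.cast_sub (by omega)]; push_cast; ring
  have hxy := weighted_norm_add_weighted_norm_le_one a hsum h hn (k := 2 * n - 1) (by omega)
    (by omega)
  rw [hweight] at hxy
  calc ‖lam * (a n) ^ 2 - a (2 * n - 1)‖ ≤ lam * ‖a n‖ ^ 2 + ‖a (2 * n - 1)‖ := by
        refine (norm_sub_le _ _).trans_eq ?_
        rw [norm_mul, norm_pow, Complex.norm_real, Real.norm_of_nonneg hlam.le]
    _ = lam / (3 * (n : ℝ) - 2) ^ 2 * ((3 * n - 2) * ‖a n‖) ^ 2
          + 1 / (6 * (n : ℝ) - 5) * ((6 * n - 5) * ‖a (2 * n - 1)‖) := by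
        rw [mul_pow, ← mul_assoc, div_mul_cancel₀ _ (pow_ne_zero 2 hp), ← mul_assoc,
          one_div_mul_cancel hq, one_mul]
    _ ≤ _ := mul_sq_add_mul_le_max_s12 (by positivity)
        (mul_nonneg (by linarith) (norm_nonneg _)) (mul_nonneg (by linarith) (norm_nonneg _)) hxy
end
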